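/- arXiv:2002.06000 — 5 statements merged into one kernel-verified Lean document; each statement's English description precedes it below -/
import Mathlib

section
/- For every infinite sequence σ of truth assignments over AP and every co-safe LTL formula φ: σ ⊨ φ if and only if there exists i ≥ 0 such that the finite prefix σ_{≤i} satisfies φ. -/
/-- LTL formulas over atoms `α`, with constants `tt`/`ff`, negation, conjunction,
disjunction, next `○` and until `U`. -/
inductive LTL (α : Type) : Type where
  | tt : LTL α
  | ff : LTL α
  | atom : α → LTL α
  | not : LTL α → LTL α
  | and : LTL α → LTL α → LTL α
  | or : LTL α → LTL α → LTL α
  | next : LTL α → LTL α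
  | untl : LTL α → LTL α → LTL α

/-- Satisfaction `⟨σ,i⟩ ⊨ φ` over infinite traces `σ : ℕ → Set α`. -/
def SatInf {α : Type} (σ : ℕ → Set α) : ℕ → LTL α → Prop
  | _, .tt => True
  | _, .ff => False
  | i, .atom p => p ∈ σ i
  | i, .not φ => ¬ SatInf σ i φ
  | i, .and φ ψ => SatInf σ i φ ∧ SatInf σ i ψ
  | i, .or φ ψ => SatInf σ i φ ∨ SatInf σ i ψ
  | i, .next φ => SatInf σ (i + 1) φ
  | i, .untl φ ψ => ∃ j, i ≤ j ∧ SatInf σ j ψ ∧ ∀ k, i ≤ k → k < j → SatInf σ k φ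

/-- Satisfaction `⟨σ,i⟩ ⊨ φ` over finite traces `σ : List (Set α)`;
positions of `σ` are the indices `< σ.length`. -/
def SatFin {α : Type} (σ : List (Set α)) : ℕ → LTL α → Prop
  | _, .tt => True
  | _, .ff => False
  | i, .atom p => p ∈ σ.getD i ∅
  | i, .not φ => ¬ SatFin σ i φ
  | i, .and φ ψ => SatFin σ i φ ∧ SatFin σ i ψ
  | i, .or φ ψ => SatFin σ i φ ∨ SatFin σ i ψ
  | i, .next φ => i + 1 < σ.length ∧ SatFin σ (i + 1) φ
  | i, .untl φ ψ =>
      ∃ j, i ≤ j ∧ j < σ.length ∧ SatFin σ j ψ ∧ ∀ k, i ≤ k → k < j → SatFin σ k φ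

/-- The co-safe fragment of LTL: negation on atoms only. -/
inductive CoSafe {α : Type} : LTL α → Prop
  | atom (p : α) : CoSafe (.atom p)
  | natom (p : α) : CoSafe (.not (.atom p))
  | and {φ ψ : LTL α} : CoSafe φ → CoSafe ψ → CoSafe (.and φ ψ)
  | or {φ ψ : LTL α} : CoSafe φ → CoSafe ψ → CoSafe (.or φ ψ)
  | next {φ : LTL α} : CoSafe φ → CoSafe (.next φ)
  | untl {φ ψ : LTL α} : CoSafe φ → CoSafe ψ → CoSafe (.untl φ ψ)

/-- The finite prefix `σ₀, …, σᵢ` of an infinite trace `σ`. -/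
def prefixUpTo {α : Type} (σ : ℕ → Set α) (i : ℕ) : List (Set α) :=
  (List.range (i + 1)).map σ

/-- Concatenation `w · σ'` of a finite trace with an infinite trace. -/
def appendInf {α : Type} (w : List (Set α)) (σ' : ℕ → Set α) : ℕ → Set α :=
  fun n => w.getD n (σ' (n - w.length))

/-!
A co-safe formula that holds on `σ` depends on finitely many positions only: a `U` on its
witness and the positions before it, a `○` on one further position. Hence it holds on every
long enough prefix, and the induction needs no monotonicity in the prefix length because
finitely many "eventually" conditions combine into one. Conversely, `○` and `U` evaluated on
a finite trace only look at positions inside it, where the prefix agrees with `σ`, so truth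
on a prefix transfers to `σ`, as negation is applied to atoms only.
-/

namespace prefixUpTo

variable {α : Type} (σ : ℕ → Set α)

@[simp]
lemma length (n : ℕ) : (prefixUpTo σ n).length = n + 1 := by
  simp [prefixUpTo]

lemma getD_of_le {i n : ℕ} (h : i ≤ n) : (prefixUpTo σ n).getD i ∅ = σ i := by
  simp [prefixUpTo, List.getElem?_range (Nat.lt_succ_of_le h)]

end prefixUpTo

namespace CoSafe

variable {α : Type} {σ : ℕ → Set α}

-- The bound `i ≤ n` matters for negated atoms: past the end of the prefix every atom is false.
theorem satInf_of_satFin_prefixUpTo {φ : LTL α} (hφ : CoSafe φ) {i n : ℕ} (hin : i ≤ n)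
    (h : SatFin (prefixUpTo σ n) i φ) : SatInf σ i φ := by
  induction hφ generalizing i with
  | atom p | natom p => simpa only [SatFin, SatInf, prefixUpTo.getD_of_le σ hin] using h
  | and _ _ ih₁ ih₂ => exact ⟨ih₁ hin h.1, ih₂ hin h.2⟩
  | or _ _ ih₁ ih₂ => exact h.imp (ih₁ hin) (ih₂ hin)
  | next _ ih =>
    obtain ⟨hlt, hnext⟩ := h
    exact ih (by simpa using hlt) hnext
  | untl _ _ ih₁ ih₂ =>
    obtain ⟨j, hij, hjn, hψ, hφ⟩ := h
    rw [prefixUpTo.length] at hjn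
    exact ⟨j, hij, ih₂ (by omega) hψ, fun k hik hkj => ih₁ (by omega) (hφ k hik hkj)⟩

theorem eventually_satFin_prefixUpTo {φ : LTL α} (hφ : CoSafe φ) {i : ℕ}
    (h : SatInf σ i φ) : ∀ᶠ n in Filter.atTop, SatFin (prefixUpTo σ n) i φ := by
  induction hφ generalizing i with
  | atom p | natom p =>
    filter_upwards [Filter.eventually_ge_atTop i] with n hin
    simpa only [SatFin, SatInf, prefixUpTo.getD_of_le σ hin] using h
  | and _ _ ih₁ ih₂ => exact (ih₁ h.1).and (ih₂ h.2)
  | or _ _ ih₁ ih₂ =>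
    rcases h with h | h
    · exact (ih₁ h).mono fun _ => Or.inl
    · exact (ih₂ h).mono fun _ => Or.inr
  | next _ ih =>
    filter_upwards [Filter.eventually_gt_atTop i, ih h] with n hin hnext
    exact ⟨by simpa using hin, hnext⟩
  | untl _ _ ih₁ ih₂ =>
    obtain ⟨j, hij, hψ, hφ⟩ := h
    have hbefore : ∀ᶠ n in Filter.atTop, ∀ k ∈ Finset.Ico i j, SatFin (prefixUpTo σ n) k _ :=
      Filter.eventually_all_finset _ |>.2 fun k hk =>
        ih₁ (hφ k (Finset.mem_Ico.1 hk).1 (Finset.mem_Ico.1 hk).2)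
    filter_upwards [Filter.eventually_ge_atTop j, ih₂ hψ, hbefore] with n hjn hψn hφn
    exact ⟨j, hij, by simpa [Nat.lt_succ_iff] using hjn, hψn,
      fun k hik hkj => hφn k (Finset.mem_Ico.2 ⟨hik, hkj⟩)⟩

end CoSafe

/-- For every infinite sequence σ of truth assignments over AP and
every co-safe LTL formula φ: σ ⊨ φ iff there exists i ≥ 0 such that the finite
prefix σ_{≤i} satisfies φ. -/
theorem cosafe_sat_iff_finite_prefix {AP : Type} (σ : ℕ → Set AP)
    (φ : LTL AP) (hφ : CoSafe φ) :
    SatInf σ 0 φ ↔ ∃ i : ℕ, SatFin (prefixUpTo σ i) 0 φ :=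
  ⟨fun h => (hφ.eventually_satFin_prefixUpTo h).exists,
    fun ⟨n, h⟩ => hφ.satInf_of_satFin_prefixUpTo n.zero_le h⟩
end

section
/- If an infinite sequence σ of truth assignments over AP satisfies a co-safe LTL formula φ, then there exists a finite index i ≥ 0 such that the finite prefix σ_{≤i} satisfies φ. -/
/-!
Since negation is applied to atoms only, satisfaction of a co-safe formula on `σ` is witnessed
by finitely many positions of `σ`, and it then persists on every prefix containing them. So by
induction on the formula it holds on all sufficiently long prefixes: the cases combine finitely
many such "eventually" statements, e.g. for `φ U ψ` the one for `ψ` at the witness `j` and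
those for `φ` at the positions `i ≤ k < j`.
-/

lemma length_prefixUpTo {α : Type} (σ : ℕ → Set α) (n : ℕ) :
    (prefixUpTo σ n).length = n + 1 := by
  simp [prefixUpTo]

lemma getD_prefixUpTo {α : Type} (σ : ℕ → Set α) {n k : ℕ} (h : k ≤ n) :
    (prefixUpTo σ n).getD k ∅ = σ k := by
  simp [prefixUpTo, List.getElem?_range (Nat.lt_succ_of_le h)]

open Filter in
theorem CoSafe.eventually_satFin_prefixUpTo_s1 {α : Type} {σ : ℕ → Set α} {φ : LTL α}
    (hφ : CoSafe φ) {i : ℕ} (h : SatInf σ i φ) :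
    ∀ᶠ n in atTop, SatFin (prefixUpTo σ n) i φ := by
  induction hφ generalizing i with
  | atom p =>
    filter_upwards [eventually_ge_atTop i] with n hn
    simpa only [SatFin, SatInf, getD_prefixUpTo σ hn] using h
  | natom p =>
    filter_upwards [eventually_ge_atTop i] with n hn
    simpa only [SatFin, SatInf, getD_prefixUpTo σ hn] using h
  | and _ _ ih₁ ih₂ => exact (ih₁ h.1).and (ih₂ h.2)
  | or _ _ ih₁ ih₂ =>
    rcases h with h | h
    · exact (ih₁ h).mono fun _ => Or.inl
    · exact (ih₂ h).mono fun _ => Or.inr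
  | next _ ih =>
    filter_upwards [eventually_ge_atTop (i + 1), ih h] with n hn hsat
    exact ⟨by rw [length_prefixUpTo]; omega, hsat⟩
  | @untl φ ψ _ _ ih₁ ih₂ =>
    obtain ⟨j, hij, hψ, hφ⟩ := h
    have hbefore : ∀ᶠ n in atTop, ∀ k ∈ Finset.Ico i j, SatFin (prefixUpTo σ n) k φ :=
      (Finset.eventually_all _).2 fun k hk =>
        ih₁ (hφ k (Finset.mem_Ico.1 hk).1 (Finset.mem_Ico.1 hk).2)
    filter_upwards [eventually_ge_atTop j, ih₂ hψ, hbefore] with n hn hsatψ hsatφ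
    exact ⟨j, hij, by rw [length_prefixUpTo]; omega, hsatψ,
      fun k hik hkj => hsatφ k (Finset.mem_Ico.2 ⟨hik, hkj⟩)⟩

/-- If an infinite sequence σ satisfies a co-safe LTL formula φ,
then some finite prefix σ_{≤i} of σ satisfies φ. -/
theorem cosafe_sat_implies_finite_prefix {AP : Type} (σ : ℕ → Set AP)
    (φ : LTL AP) (hφ : CoSafe φ) (h : SatInf σ 0 φ) :
    ∃ i : ℕ, SatFin (prefixUpTo σ i) 0 φ :=
  (hφ.eventually_satFin_prefixUpTo_s1 h).exists
end

section
/- LTL progression is sound: for every infinite sequence σ of truth assignments over AP, every LTL formula φ, and every position k, ⟨σ,k⟩ ⊨ φ if and only if ⟨σ,k+1⟩ ⊨ prog(σ_k, φ). -/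
open Classical in
/-- LTL progression `prog(σ_k, φ)` with respect to a single truth assignment. -/
noncomputable def prog {α : Type} (v : Set α) : LTL α → LTL α
  | .tt => .tt
  | .ff => .ff
  | .atom p => if p ∈ v then .tt else .ff
  | .not φ => .not (prog v φ)
  | .and φ ψ => .and (prog v φ) (prog v ψ)
  | .or φ ψ => .or (prog v φ) (prog v ψ)
  | .next φ => φ
  | .untl φ ψ => .or (prog v ψ) (.and (prog v φ) (.untl φ ψ))

theorem satInf_untl_iff {α : Type} (σ : ℕ → Set α) (k : ℕ) (φ ψ : LTL α) :
    SatInf σ k (.untl φ ψ) ↔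
      SatInf σ k ψ ∨ (SatInf σ k φ ∧ SatInf σ (k + 1) (.untl φ ψ)) := by
  constructor
  · rintro ⟨j, hkj, hψ, hφ⟩
    rcases hkj.eq_or_lt with rfl | hkj
    · exact .inl hψ
    · exact .inr ⟨hφ k le_rfl hkj, j, hkj, hψ, fun m hm hmj => hφ m (by omega) hmj⟩
  · rintro (hψ | ⟨hφ, j, hkj, hψ, hφ'⟩)
    · exact ⟨k, le_rfl, hψ, fun m hm hmk => absurd hmk (not_lt.2 hm)⟩
    · refine ⟨j, by omega, hψ, fun m hm hmj => ?_⟩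
      rcases hm.eq_or_lt with rfl | hm
      · exact hφ
      · exact hφ' m hm hmj

/-- LTL progression is sound: for every infinite trace σ, LTL
formula φ and position k, ⟨σ,k⟩ ⊨ φ iff ⟨σ,k+1⟩ ⊨ prog(σ_k, φ). -/
theorem progression_sound {AP : Type} (σ : ℕ → Set AP) (φ : LTL AP) (k : ℕ) :
    SatInf σ k φ ↔ SatInf σ (k + 1) (prog (σ k) φ) := by
  induction φ generalizing k with
  | tt | ff | next φ => simp [SatInf, prog]
  | atom p => by_cases hp : p ∈ σ k <;> simp [SatInf, prog, hp]
  | not φ ih => simp [SatInf, prog, ih k]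
  | and φ ψ ihφ ihψ | or φ ψ ihφ ihψ => simp [SatInf, prog, ihφ k, ihψ k]
  | untl φ ψ ihφ ihψ =>
    -- `prog` unfolds `φ U ψ` by the same expansion law, with `φ` and `ψ` progressed
    rw [satInf_untl_iff, ihφ, ihψ]
    rfl
end

section
/- Strongly correspondent trajectories receive equal rewards: let η = ⟨s₀, u₁, s₁, …, u_l, s_l⟩ be a trajectory in the NMRG, and let η' = ⟨s₀', u₁, s₁', …, u_l, s_l'⟩ be its unique lift to the equivalent Markov game, defined by s₀' = ρ(s₀) and s_t' = (q_{1,t},…,q_{M,t}, s_t) with q_{k,t} = δ_k(q_{k,t-1}, L(s_t)) for t ≥ 1. If each DFA A_k accepts a finite word over 2^AP exactly when that word, as a finite trace, satisfies φ_k, then for each k the final component satisfies q_{k,l} ∈ F_k if and only if the label trace L(s₁)⋯L(s_l) satisfies φ_k; consequently the non-Markovian reward R̄(η) = Σ_{k : L(s₁)⋯L(s_l) ⊨ φ_k} r_k equals the Markovian reward R'(s_{l-1}', u_l, s_l') = Σ_{k : q_{k,l} ∈ F_k} r_k collected at the final transition of η'. -/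
theorem List.foldl_map_range_of_succ {α β : Type*} (f : α → β → α) (a : ℕ → β) (x : ℕ → α)
    (hx : ∀ t, x (t + 1) = f (x t) (a t)) (t : ℕ) :
    ((List.range t).map a).foldl f (x 0) = x t := by
  induction t with
  | zero => rfl
  | succ t ih => simp [List.range_succ, ih, hx]

open Classical in
theorem strongly_correspondent_equal_rewards_general {S AP : Type} {M : ℕ}
    (Q : Fin M → Type) (δ : ∀ k : Fin M, Q k → Set AP → Q k)
    (q₀ : ∀ k, Q k) (F : ∀ k : Fin M, Set (Q k)) (L : S → Set AP)
    (r : Fin M → ℝ) (φ : Fin M → LTL AP)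
    (hdfa : ∀ (k : Fin M) (w : List (Set AP)),
        w.foldl (δ k) (q₀ k) ∈ F k ↔ SatFin w 0 (φ k))
    (l : ℕ) (s : ℕ → S)
    (q : ℕ → ∀ k, Q k) (hq0 : q 0 = q₀)
    (hqstep : ∀ (t : ℕ) (k : Fin M), q (t + 1) k = δ k (q t k) (L (s (t + 1)))) :
    (∀ k : Fin M,
        q l k ∈ F k ↔
          SatFin ((List.range l).map (fun t => L (s (t + 1)))) 0 (φ k)) ∧
    (∑ k : Fin M,
        if SatFin ((List.range l).map (fun t => L (s (t + 1)))) 0 (φ k)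
          then r k else 0)
      = ∑ k : Fin M, if q l k ∈ F k then r k else 0 := by
  have accept_iff (k : Fin M) :
      q l k ∈ F k ↔ SatFin ((List.range l).map (fun t => L (s (t + 1)))) 0 (φ k) := by
    rw [← List.foldl_map_range_of_succ (δ k) _ (q · k) (hqstep · k) l, hq0]
    exact hdfa k _
  refine ⟨accept_iff, Finset.sum_congr rfl fun k _ => ?_⟩
  simp only [accept_iff]

open Classical in
/-- Strongly correspondent trajectories receive equal rewards.
Here `s : ℕ → S` (with actions `u : ℕ → U`) describes the NMRG trajectory
⟨s₀,u₁,s₁,…,u_l,s_l⟩ and `q : ℕ → ∀ k, Q k` its unique lift, with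
q₀ = q⃗₀ and q_{k,t} = δ_k(q_{k,t-1}, L(s_t)).  If each DFA A_k accepts a
finite word over 2^AP exactly when it satisfies φ_k, then q_{k,l} ∈ F_k iff
the label trace L(s₁)⋯L(s_l) satisfies φ_k, and the non-Markovian reward
Σ_{k : L(s₁)⋯L(s_l) ⊨ φ_k} r_k equals the Markovian reward
Σ_{k : q_{k,l} ∈ F_k} r_k collected at the final transition. -/
theorem strongly_correspondent_equal_rewards {S U AP : Type} {M : ℕ}
    (Q : Fin M → Type) (δ : ∀ k : Fin M, Q k → Set AP → Q k)
    (q₀ : ∀ k, Q k) (F : ∀ k : Fin M, Set (Q k)) (L : S → Set AP)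
    (r : Fin M → ℝ) (φ : Fin M → LTL AP) (hφ : ∀ k, CoSafe (φ k))
    (hdfa : ∀ (k : Fin M) (w : List (Set AP)),
        w.foldl (δ k) (q₀ k) ∈ F k ↔ SatFin w 0 (φ k))
    (l : ℕ) (hl : 1 ≤ l) (s : ℕ → S) (u : ℕ → U)
    (q : ℕ → ∀ k, Q k) (hq0 : q 0 = q₀)
    (hqstep : ∀ (t : ℕ) (k : Fin M), q (t + 1) k = δ k (q t k) (L (s (t + 1)))) :
    (∀ k : Fin M,
        q l k ∈ F k ↔
          SatFin ((List.range l).map (fun t => L (s (t + 1)))) 0 (φ k)) ∧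
    (∑ k : Fin M,
        if SatFin ((List.range l).map (fun t => L (s (t + 1)))) 0 (φ k)
          then r k else 0)
      = ∑ k : Fin M, if q l k ∈ F k then r k else 0 :=
  strongly_correspondent_equal_rewards_general Q δ q₀ F L r φ hdfa l s q hq0 hqstep
end

section
/- The NMRG with co-safe LTL specifications is equivalent to its extended Markov game: with τ(q⃗,s) = s and ρ(s) = (q_{10},…,q_{M0},s), (1) τ(ρ(s)) = s for all s ∈ S; (2) for all s₁, s₂ ∈ S and s₁' ∈ S' with P(s₁,u,s₂) > 0 and τ(s₁') = s₁, there exists a unique s₂' ∈ S' with τ(s₂') = s₂ and P'(s₁',u,s₂') = P(s₁,u,s₂); and (3) for every feasible trajectory ⟨s₀,u₁,…,u_l,s_l⟩ of the NMRG and the weakly correspondent trajectory ⟨s₀',u₁,…,u_l,s_l'⟩ of the extended game with ρ(s₀) = s₀' and τ(s_t') = s_t for all t, the non-Markovian reward R̄(⟨s₀,u₁,…,u_l,s_l⟩) equals the reward R' collected at the final transition of ⟨s₀',u₁,…,u_l,s_l'⟩, provided each DFA A_k accepts exactly the finite traces over 2^AP satisfying φ_k. -/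
open Classical in
/-- The extended transition function `P'` of the extended Markov game:
`P'((q⃗,s), u, (q⃗',s')) = P(s,u,s')` if `q'_k = δ_k(q_k, L(s'))` for all `k`,
and `0` otherwise.  States of the extended game are pairs in `(∀ k, Q k) × S`. -/
noncomputable def Pext {S U AP : Type} {M : ℕ} (Q : Fin M → Type)
    (δ : ∀ k : Fin M, Q k → Set AP → Q k) (L : S → Set AP)
    (P : S → U → S → ℝ) (x : (∀ k, Q k) × S) (u : U)
    (x' : (∀ k, Q k) × S) : ℝ :=
  if ∀ k, x'.1 k = δ k (x.1 k) (L x'.2) then P x.2 u x'.2 else 0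

/-!
The automaton components of an extended state are forced by the transition rule of `Pext`: a
transition of positive probability must move the `k`-th component by `δ k` on the label of the
new base state. Hence along a feasible extended trajectory started at `(q₀, s₀)` the `k`-th
component is the run of `A_k` on the label trace, and it lies in `F k` exactly when the trace
satisfies `φ k`.
-/

section ExtendedGame

variable {S U AP : Type} {M : ℕ} (Q : Fin M → Type) (δ : ∀ k : Fin M, Q k → Set AP → Q k)
  (L : S → Set AP) (P : S → U → S → ℝ)

theorem Pext_of_forall_eq_step {x x' : (∀ k, Q k) × S} {u : U}
    (h : ∀ k, x'.1 k = δ k (x.1 k) (L x'.2)) : Pext Q δ L P x u x' = P x.2 u x'.2 :=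
  if_pos h

theorem forall_eq_step_of_Pext_ne_zero {x x' : (∀ k, Q k) × S} {u : U}
    (h : Pext Q δ L P x u x' ≠ 0) : ∀ k, x'.1 k = δ k (x.1 k) (L x'.2) := by
  by_contra hstep
  exact h (if_neg hstep)

theorem existsUnique_Pext_eq (x₁ : (∀ k, Q k) × S) {u : U} {s₂ : S}
    (hpos : P x₁.2 u s₂ ≠ 0) :
    ∃! x₂ : (∀ k, Q k) × S, x₂.2 = s₂ ∧ Pext Q δ L P x₁ u x₂ = P x₁.2 u s₂ := by
  refine ⟨(fun k => δ k (x₁.1 k) (L s₂), s₂),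
    ⟨rfl, Pext_of_forall_eq_step Q δ L P fun _ => rfl⟩, ?_⟩
  rintro ⟨q, s⟩ ⟨rfl, hq⟩
  exact Prod.ext (funext (forall_eq_step_of_Pext_ne_zero Q δ L P (hq ▸ hpos))) rfl

theorem fst_eq_foldl_of_Pext_ne_zero {x : ℕ → (∀ k, Q k) × S} {u : ℕ → U} {l : ℕ}
    (hfeas : ∀ t < l, Pext Q δ L P (x t) (u t) (x (t + 1)) ≠ 0) (k : Fin M) :
    ∀ t ≤ l, (x t).1 k = ((List.range t).map fun i => L (x (i + 1)).2).foldl (δ k) ((x 0).1 k)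
  | 0, _ => rfl
  | t + 1, ht => by
    rw [List.range_succ, List.map_append, List.foldl_append, List.map_singleton,
      List.foldl_cons, List.foldl_nil,
      ← fst_eq_foldl_of_Pext_ne_zero hfeas k t (Nat.le_of_succ_le ht)]
    exact forall_eq_step_of_Pext_ne_zero Q δ L P (hfeas t ht) k

end ExtendedGame

open Classical in
theorem nmrg_equivalent_to_extended_markov_game_general {S U AP : Type} {M : ℕ}
    (Q : Fin M → Type) (δ : ∀ k : Fin M, Q k → Set AP → Q k)
    (q₀ : ∀ k, Q k) (F : ∀ k : Fin M, Set (Q k)) (L : S → Set AP)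
    (P : S → U → S → ℝ)
    (r : Fin M → ℝ) (φ : Fin M → LTL AP)
    (hdfa : ∀ (k : Fin M) (w : List (Set AP)),
        w.foldl (δ k) (q₀ k) ∈ F k ↔ SatFin w 0 (φ k)) :
    -- (1) τ ∘ ρ = id
    (∀ s : S, (((q₀, s) : (∀ k, Q k) × S)).2 = s) ∧
    -- (2) unique lifting of positive-probability transitions
    (∀ (s₁ s₂ : S) (u : U) (x₁ : (∀ k, Q k) × S),
        0 < P s₁ u s₂ → x₁.2 = s₁ →
        ∃! x₂ : (∀ k, Q k) × S,
          x₂.2 = s₂ ∧ Pext Q δ L P x₁ u x₂ = P s₁ u s₂) ∧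
    -- (3) equal rewards on strongly correspondent feasible trajectories
    (∀ (l : ℕ), 1 ≤ l → ∀ (s : ℕ → S) (u : ℕ → U)
        (x : ℕ → (∀ k, Q k) × S),
        (∀ t < l, 0 < P (s t) (u t) (s (t + 1))) →
        x 0 = (q₀, s 0) →
        (∀ t ≤ l, (x t).2 = s t) →
        (∀ t < l, 0 < Pext Q δ L P (x t) (u t) (x (t + 1))) →
        (∑ k : Fin M,
            if SatFin ((List.range l).map (fun t => L (s (t + 1)))) 0 (φ k)
              then r k else 0)
          = ∑ k : Fin M, if (x l).1 k ∈ F k then r k else 0) := by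
  refine ⟨fun _ => rfl, ?_, ?_⟩
  · rintro s₁ s₂ u x₁ hpos rfl
    exact existsUnique_Pext_eq Q δ L P x₁ hpos.ne'
  · intro l _ s u x _ hx0 hτ hfeas
    have hrun := fst_eq_foldl_of_Pext_ne_zero Q δ L P (fun t ht => (hfeas t ht).ne')
    have htrace : ((List.range l).map fun t => L (x (t + 1)).2)
        = (List.range l).map fun t => L (s (t + 1)) :=
      List.map_congr_left fun t ht => by rw [hτ (t + 1) (List.mem_range.1 ht)]
    refine Finset.sum_congr rfl fun k _ => if_congr ?_ rfl rfl
    rw [hrun k l le_rfl, htrace, hx0]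
    exact (hdfa k _).symm

open Classical in
/-- The NMRG with co-safe LTL specifications is equivalent to its
extended Markov game, with τ(q⃗,s) = s and ρ(s) = (q⃗₀,s):
(1) τ(ρ(s)) = s for all s;
(2) every transition of positive probability lifts uniquely to the extended game;
(3) for every feasible NMRG trajectory and the weakly correspondent feasible
trajectory of the extended game starting at ρ(s₀), the non-Markovian reward
equals the reward R' collected at the final transition, provided each DFA A_k
accepts exactly the finite traces over 2^AP satisfying φ_k. -/
theorem nmrg_equivalent_to_extended_markov_game {S U AP : Type} {M : ℕ}
    (Q : Fin M → Type) (δ : ∀ k : Fin M, Q k → Set AP → Q k)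
    (q₀ : ∀ k, Q k) (F : ∀ k : Fin M, Set (Q k)) (L : S → Set AP)
    (P : S → U → S → ℝ)
    (hP01 : ∀ (s : S) (u : U) (s' : S), P s u s' ∈ Set.Icc (0 : ℝ) 1)
    (r : Fin M → ℝ) (φ : Fin M → LTL AP) (hφ : ∀ k, CoSafe (φ k))
    (hdfa : ∀ (k : Fin M) (w : List (Set AP)),
        w.foldl (δ k) (q₀ k) ∈ F k ↔ SatFin w 0 (φ k)) :
    -- (1) τ ∘ ρ = id
    (∀ s : S, (((q₀, s) : (∀ k, Q k) × S)).2 = s) ∧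
    -- (2) unique lifting of positive-probability transitions
    (∀ (s₁ s₂ : S) (u : U) (x₁ : (∀ k, Q k) × S),
        0 < P s₁ u s₂ → x₁.2 = s₁ →
        ∃! x₂ : (∀ k, Q k) × S,
          x₂.2 = s₂ ∧ Pext Q δ L P x₁ u x₂ = P s₁ u s₂) ∧
    -- (3) equal rewards on strongly correspondent feasible trajectories
    (∀ (l : ℕ), 1 ≤ l → ∀ (s : ℕ → S) (u : ℕ → U)
        (x : ℕ → (∀ k, Q k) × S),
        (∀ t < l, 0 < P (s t) (u t) (s (t + 1))) →
        x 0 = (q₀, s 0) →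
        (∀ t ≤ l, (x t).2 = s t) →
        (∀ t < l, 0 < Pext Q δ L P (x t) (u t) (x (t + 1))) →
        (∑ k : Fin M,
            if SatFin ((List.range l).map (fun t => L (s (t + 1)))) 0 (φ k)
              then r k else 0)
          = ∑ k : Fin M, if (x l).1 k ∈ F k then r k else 0) :=
  nmrg_equivalent_to_extended_markov_game_general Q δ q₀ F L P r φ hdfa
end
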